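/- arXiv:2207.00079 — 3 statements merged into one kernel-verified Lean document; each statement's English description precedes it below -/
import Mathlib

section
/- Let W : GL⁺(3,ℝ) → [0,∞) be a C² strain energy function that is homogeneous of degree h, and let S be its Piola–Kirchhoff stress. Let τ > 0, μ ∈ ℝ, and let a ∈ C²([0,τ)) be positive and solve ä(t) = μ a(t)^{h−1} on [0,τ). Let φ ∈ C²(B,ℝ³) ∩ C¹(closure(B),ℝ³) satisfy Dφ(y) ∈ GL⁺(3,ℝ) for all y, solve (D·S(Dφ))(y) = μ φ(y) in B, and satisfy S(Dφ(y)) (y/|y|) = 0 for |y| = 1. Then the motion x(t,y) = a(t) φ(y) satisfies ∂²_t x(t,y) = (D_y·S(D_y x(t,·)))(y) for all (t,y) ∈ [0,τ) × B, and S(D_y x(t,y)) (y/|y|) = 0 for all t ∈ [0,τ) and |y| = 1. -/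
open Matrix Set MeasureTheory

noncomputable section

attribute [local instance] Matrix.normedAddCommGroup Matrix.normedSpace

abbrev Mat3 := Matrix (Fin 3) (Fin 3) ℝ
abbrev V3 := EuclideanSpace ℝ (Fin 3)

def GLpos (F : Mat3) : Prop := 0 < F.det

def Objective (W : Mat3 → ℝ) : Prop :=
  ∀ F : Mat3, GLpos F → ∀ U : Mat3, U * Uᵀ = 1 → U.det = 1 → W (U * F) = W F

def Isotropic (W : Mat3 → ℝ) : Prop :=
  ∀ F : Mat3, GLpos F → ∀ U : Mat3, U * Uᵀ = 1 → U.det = 1 → W (F * U) = W F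

def HomDeg (W : Mat3 → ℝ) (h : ℝ) : Prop :=
  ∀ F : Mat3, GLpos F → ∀ σ : ℝ, 0 < σ → W (σ • F) = σ ^ h * W F

noncomputable def PK (W : Mat3 → ℝ) (F : Mat3) : Mat3 :=
  Matrix.of fun i j => fderiv ℝ W F (Matrix.single i j 1)

noncomputable def jac (φ : V3 → V3) (y : V3) : Mat3 :=
  Matrix.of fun i j => fderiv ℝ (fun z => φ z i) y (EuclideanSpace.single j 1)

noncomputable def jacIn (φ : V3 → V3) (s : Set V3) (y : V3) : Mat3 :=
  Matrix.of fun i j => fderivWithin ℝ (fun z => φ z i) s y (EuclideanSpace.single j 1)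

noncomputable def divMat (S : V3 → Mat3) (y : V3) : V3 :=
  WithLp.toLp 2 (fun i => ∑ j : Fin 3, fderiv ℝ (fun z => S z i j) y (EuclideanSpace.single j 1))

noncomputable def P1 (ω : V3) : Mat3 := Matrix.vecMulVec (fun i => ω i) (fun i => ω i)

noncomputable def P2 (ω : V3) : Mat3 := 1 - P1 ω

noncomputable def Fmat (l1 l2 : ℝ) (ω : V3) : Mat3 := l1 • P1 ω + l2 • P2 ω

/-!
The motion separates because every operation in the elastodynamic equations is compatible
with scaling. Homogeneity of degree `h` makes the stress homogeneous of degree `h - 1`, so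
`S(a(t) Dφ) = a(t)^(h-1) S(Dφ)`; hence the divergence of the stress of `a(t) φ` is
`a(t)^(h-1) μ φ = ä(t) φ`, and the vacuum boundary condition of `φ` is only rescaled.
-/

open Filter Topology

lemma isOpen_GLpos : IsOpen {F : Mat3 | GLpos F} :=
  isOpen_lt continuous_const continuous_id.matrix_det

lemma fderiv_smul_of_eventually_homogeneous {E G : Type*} [NormedAddCommGroup E]
    [NormedSpace ℝ E] [NormedAddCommGroup G] [NormedSpace ℝ G] {W : E → G} {h σ : ℝ} {x : E}
    (hσ : 0 < σ) (hW : (fun y => W (σ • y)) =ᶠ[𝓝 x] fun y => σ ^ h • W y) :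
    fderiv ℝ W (σ • x) = σ ^ (h - 1) • fderiv ℝ W x := by
  -- `fderiv_comp_smul` needs no differentiability since `σ • ·` is a linear isomorphism,
  -- so the junk value `0` is matched on both sides.
  have hcomp : σ • fderiv ℝ W (σ • x) = σ ^ h • fderiv ℝ W x := by
    rw [← fderiv_comp_smul (f := W) (x := x) σ, hW.fderiv_eq]
    exact congrFun (fderiv_const_smul_field (𝕜 := ℝ) (f := W) (σ ^ h)) x
  rw [Real.rpow_sub hσ, Real.rpow_one, div_eq_inv_mul, mul_smul, ← hcomp, smul_smul,
    inv_mul_cancel₀ hσ.ne', one_smul]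

lemma PK_smul {W : Mat3 → ℝ} {h : ℝ} (hW : HomDeg W h) {F : Mat3} (hF : GLpos F) {σ : ℝ}
    (hσ : 0 < σ) : PK W (σ • F) = σ ^ (h - 1) • PK W F := by
  have hW' : (fun G => W (σ • G)) =ᶠ[𝓝 F] fun G => σ ^ h • W G :=
    eventually_of_mem (isOpen_GLpos.mem_nhds hF) fun G hG => hW G hG σ hσ
  ext i j
  exact congrArg (· (single i j 1)) (fderiv_smul_of_eventually_homogeneous hσ hW')

lemma jac_smul (c : ℝ) (φ : V3 → V3) (y : V3) :
    jac (fun z => c • φ z) y = c • jac φ y := by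
  ext i j
  exact congrArg (· (EuclideanSpace.single j 1))
    (congrFun (fderiv_const_smul_field (f := fun z => φ z i) (𝕜 := ℝ) c) y)

lemma jacIn_smul (c : ℝ) (φ : V3 → V3) {s : Set V3} {y : V3} (hs : UniqueDiffWithinAt ℝ s y) :
    jacIn (fun z => c • φ z) s y = c • jacIn φ s y := by
  ext i j
  exact congrArg (· (EuclideanSpace.single j 1))
    (fderivWithin_const_smul_field (f := fun z => φ z i) (𝕜 := ℝ) c hs)

lemma jacIn_of_mem_nhds (φ : V3 → V3) {s : Set V3} {y : V3} (hs : s ∈ 𝓝 y) :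
    jacIn φ s y = jac φ y := by
  ext i j
  simp only [jacIn, jac, fderivWithin_of_mem_nhds hs]

lemma divMat_congr {S T : V3 → Mat3} {y : V3} (hST : S =ᶠ[𝓝 y] T) :
    divMat S y = divMat T y := by
  simp only [divMat]
  congr! 3 with i j
  have hij : (fun z => S z i j) =ᶠ[𝓝 y] fun z => T z i j := hST.mono fun z hz => congrFun₂ hz i j
  rw [hij.fderiv_eq]

lemma divMat_smul (c : ℝ) (S : V3 → Mat3) (y : V3) :
    divMat (fun z => c • S z) y = c • divMat S y := by
  rw [divMat, divMat, ← WithLp.toLp_smul]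
  congr 1
  funext i
  refine (Finset.sum_congr rfl fun j _ => ?_).trans (Finset.mul_sum _ _ c).symm
  exact congrArg (· (EuclideanSpace.single j 1))
    (congrFun (fderiv_const_smul_field (f := fun z => S z i j) (𝕜 := ℝ) c) y)

lemma derivWithin_derivWithin_smul_const {E : Type*} [NormedAddCommGroup E] [NormedSpace ℝ E]
    {a : ℝ → ℝ} {s : Set ℝ} {t : ℝ} (ht : t ∈ s) (ha : DifferentiableOn ℝ a s)
    (ha' : DifferentiableWithinAt ℝ (derivWithin a s) s t) (v : E) :
    derivWithin (derivWithin (fun r => a r • v) s) s t = derivWithin (derivWithin a s) s t • v := by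
  have hfirst : EqOn (derivWithin (fun r => a r • v) s) (fun r => derivWithin a s r • v) s :=
    fun r hr => derivWithin_smul_const (ha r hr) v
  rw [derivWithin_congr hfirst (hfirst ht), derivWithin_smul_const ha' v]

theorem separable_motion_solves_elastodynamics_general
    (W : Mat3 → ℝ) (h : ℝ)
    (hWhom : HomDeg W h)
    (τ μ : ℝ)
    (a : ℝ → ℝ)
    (haC2 : ContDiffOn ℝ 2 a (Set.Ico 0 τ))
    (hapos : ∀ t ∈ Set.Ico (0:ℝ) τ, 0 < a t)
    (hODE : ∀ t ∈ Set.Ico (0:ℝ) τ,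
      derivWithin (derivWithin a (Set.Ico 0 τ)) (Set.Ico 0 τ) t = μ * a t ^ (h - 1))
    (φ : V3 → V3)
    (hφGL : ∀ y ∈ Metric.closedBall (0:V3) 1, GLpos (jacIn φ (Metric.closedBall 0 1) y))
    (hEig : ∀ y ∈ Metric.ball (0:V3) 1,
      divMat (fun z => PK W (jac φ z)) y = μ • φ y)
    (hBC : ∀ y : V3, ‖y‖ = 1 → (PK W (jacIn φ (Metric.closedBall 0 1) y)).mulVec (fun j => y j) = 0) :
    (∀ t ∈ Set.Ico (0:ℝ) τ, ∀ y ∈ Metric.ball (0:V3) 1,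
      derivWithin (derivWithin (fun s : ℝ => a s • φ y) (Set.Ico 0 τ)) (Set.Ico 0 τ) t
        = divMat (fun z => PK W (jac (fun z' => a t • φ z') z)) y) ∧
    (∀ t ∈ Set.Ico (0:ℝ) τ, ∀ y : V3, ‖y‖ = 1 →
      (PK W (jacIn (fun z' => a t • φ z') (Metric.closedBall 0 1) y)).mulVec (fun j => y j) = 0) := by
  have hball : ∀ z ∈ Metric.ball (0 : V3) 1, GLpos (jac φ z) := fun z hz => by
    rw [← jacIn_of_mem_nhds φ (Metric.closedBall_mem_nhds_of_mem hz)]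
    exact hφGL z (Metric.ball_subset_closedBall hz)
  refine ⟨fun t ht y hy => ?_, fun t ht y hy => ?_⟩
  · have hstress : (fun z => PK W (jac (fun z' => a t • φ z') z))
        =ᶠ[𝓝 y] fun z => a t ^ (h - 1) • PK W (jac φ z) :=
      eventually_of_mem (Metric.isOpen_ball.mem_nhds hy) fun z hz => by
        dsimp only
        rw [jac_smul, PK_smul hWhom (hball z hz) (hapos t ht)]
    have ha' : DifferentiableOn ℝ (derivWithin a (Ico 0 τ)) (Ico 0 τ) :=
      (haC2.derivWithin (uniqueDiffOn_Ico 0 τ) (m := 1) (by norm_num)).differentiableOn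
        one_ne_zero
    rw [derivWithin_derivWithin_smul_const ht (haC2.differentiableOn two_ne_zero) (ha' t ht),
      hODE t ht, divMat_congr hstress, divMat_smul, hEig y hy, smul_smul, mul_comm]
  · have hy' : y ∈ Metric.closedBall (0 : V3) 1 := mem_closedBall_zero_iff.2 hy.le
    have hunique : UniqueDiffOn ℝ (Metric.closedBall (0 : V3) 1) :=
      uniqueDiffOn_convex (convex_closedBall _ _)
        (by rw [interior_closedBall _ one_ne_zero]; exact ⟨0, by simp⟩)
    rw [jacIn_smul _ _ (hunique y hy'), PK_smul hWhom (hφGL y hy') (hapos t ht),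
      smul_mulVec, hBC y hy, smul_zero]

/-- A separable motion `x(t,y) = a(t) φ(y)` built from a positive solution of
`ä = μ a^{h-1}` and an eigenfunction `φ` of the elastic operator with vacuum boundary
condition satisfies the equations of elastodynamics with the vacuum boundary condition. -/
theorem separable_motion_solves_elastodynamics
    (W : Mat3 → ℝ) (h : ℝ)
    (hW0 : ∀ F : Mat3, GLpos F → 0 ≤ W F)
    (hWC2 : ContDiffOn ℝ 2 W {F : Mat3 | GLpos F})
    (hWhom : HomDeg W h)
    (τ μ : ℝ) (hτ : 0 < τ)
    (a : ℝ → ℝ)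
    (haC2 : ContDiffOn ℝ 2 a (Set.Ico 0 τ))
    (hapos : ∀ t ∈ Set.Ico (0:ℝ) τ, 0 < a t)
    (hODE : ∀ t ∈ Set.Ico (0:ℝ) τ,
      derivWithin (derivWithin a (Set.Ico 0 τ)) (Set.Ico 0 τ) t = μ * a t ^ (h - 1))
    (φ : V3 → V3)
    (hφC2 : ContDiffOn ℝ 2 φ (Metric.ball (0:V3) 1))
    (hφC1 : ContDiffOn ℝ 1 φ (Metric.closedBall (0:V3) 1))
    (hφGL : ∀ y ∈ Metric.closedBall (0:V3) 1, GLpos (jacIn φ (Metric.closedBall 0 1) y))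
    (hEig : ∀ y ∈ Metric.ball (0:V3) 1,
      divMat (fun z => PK W (jac φ z)) y = μ • φ y)
    (hBC : ∀ y : V3, ‖y‖ = 1 → (PK W (jacIn φ (Metric.closedBall 0 1) y)).mulVec (fun j => y j) = 0) :
    (∀ t ∈ Set.Ico (0:ℝ) τ, ∀ y ∈ Metric.ball (0:V3) 1,
      derivWithin (derivWithin (fun s : ℝ => a s • φ y) (Set.Ico 0 τ)) (Set.Ico 0 τ) t
        = divMat (fun z => PK W (jac (fun z' => a t • φ z') z)) y) ∧
    (∀ t ∈ Set.Ico (0:ℝ) τ, ∀ y : V3, ‖y‖ = 1 →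
      (PK W (jacIn (fun z' => a t • φ z') (Metric.closedBall 0 1) y)).mulVec (fun j => y j) = 0) :=
  separable_motion_solves_elastodynamics_general W h hWhom τ μ a haC2 hapos hODE φ hφGL hEig hBC
end
end

section
/- Let h > 1 and μ < 0. For every pair (a₀, a₁) ∈ ℝ₊ × ℝ, the maximal strictly positive C² solution a : [0,τ) → ℝ₊ of the initial value problem ä(t) = μ a(t)^{h−1}, a(0) = a₀, ȧ(0) = a₁, has finite lifespan τ < ∞, and a(t) → 0 as t → τ⁻. -/
/-!
Since `μ < 0`, a positive solution is concave. On a half-line, concavity and positivity force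
`ȧ ≥ 0`, hence `a ≥ a(0)` and `ä ≤ μ a(0)^(h-1) < 0`, which drives `ȧ` below zero: there is no
global positive solution. On a finite interval `[0, τ)`, concavity bounds `a` above, hence `ä`
below, so `a - m t` and `ȧ - m' t` are monotone and bounded for suitable constants `m, m'`, and
`a` and `ȧ` have limits `A` and `L` at `τ`. If `A > 0`, the vector field
`(x, y) ↦ (y, μ x^(h-1))` is `C¹` near `(A, L)`, and gluing the local solution through `(A, L)`
at time `τ` continues `a` past `τ`, contradicting maximality. Hence `A = 0`.
-/

open Set Filter Topology

section

variable {D : Set ℝ} {f f' : ℝ → ℝ} {C : ℝ}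

theorem Convex.image_sub_le_mul_sub_of_hasDerivWithinAt_le (hD : Convex ℝ D)
    (hf : ∀ x ∈ D, HasDerivWithinAt f (f' x) D x) (hf' : ∀ x ∈ D, f' x ≤ C) :
    ∀ x ∈ D, ∀ y ∈ D, x ≤ y → f y - f x ≤ C * (y - x) := by
  have hint : ∀ x ∈ interior D, HasDerivWithinAt f (f' x) (interior D) x :=
    fun x hx ↦ (hf x (interior_subset hx)).mono interior_subset
  refine hD.image_sub_le_mul_sub_of_deriv_le (fun x hx ↦ (hf x hx).continuousWithinAt)
    (fun x hx ↦ (hint x hx).differentiableWithinAt) fun x hx ↦ ?_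
  rw [deriv_eqOn isOpen_interior hint hx]
  exact hf' x (interior_subset hx)

theorem Convex.mul_sub_le_image_sub_of_le_hasDerivWithinAt (hD : Convex ℝ D)
    (hf : ∀ x ∈ D, HasDerivWithinAt f (f' x) D x) (hf' : ∀ x ∈ D, C ≤ f' x) :
    ∀ x ∈ D, ∀ y ∈ D, x ≤ y → C * (y - x) ≤ f y - f x := by
  intro x hx y hy hxy
  have := hD.image_sub_le_mul_sub_of_hasDerivWithinAt_le (f := -f) (f' := -f') (C := -C)
    (fun x hx ↦ (hf x hx).neg) (fun x hx ↦ neg_le_neg (hf' x hx)) x hx y hy hxy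
  simp only [Pi.neg_apply] at this
  linarith

theorem exists_neg_of_hasDerivWithinAt_le_neg {x₀ : ℝ} (hC : C < 0)
    (hf : ∀ x ∈ Ici x₀, HasDerivWithinAt f (f' x) (Ici x₀) x) (hf' : ∀ x ∈ Ici x₀, f' x ≤ C) :
    ∃ x ∈ Ici x₀, f x < 0 := by
  set T := (|f x₀| + 1) / -C with hT_def
  have hT : 0 < T := div_pos (by positivity) (neg_pos.2 hC)
  have hCT : C * T = -(|f x₀| + 1) := by
    rw [hT_def, mul_div_assoc', div_neg, mul_comm, mul_div_assoc, div_self hC.ne, mul_one]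
  refine ⟨x₀ + T, by simp [hT.le], ?_⟩
  have := (convex_Ici x₀).image_sub_le_mul_sub_of_hasDerivWithinAt_le hf hf' x₀ self_mem_Ici
    (x₀ + T) (by simp [hT.le]) (by linarith)
  rw [add_sub_cancel_left, hCT] at this
  linarith [le_abs_self (f x₀)]

theorem exists_tendsto_nhdsLT_of_le_deriv {σ τ m M : ℝ} (hστ : σ < τ)
    (hf : ∀ t ∈ Ioo σ τ, HasDerivAt f (f' t) t) (hm : ∀ t ∈ Ioo σ τ, m ≤ f' t)
    (hM : ∀ t ∈ Ioo σ τ, f t ≤ M) : ∃ l, Tendsto f (𝓝[<] τ) (𝓝 l) := by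
  have hg : ∀ t ∈ Ioo σ τ, HasDerivAt (fun t ↦ f t - m * t) (f' t - m) t := fun t ht ↦ by
    simpa using (hf t ht).fun_sub ((hasDerivAt_id t).const_mul m)
  have hmono : MonotoneOn (fun t ↦ f t - m * t) (Ioo σ τ) := by
    refine monotoneOn_of_hasDerivWithinAt_nonneg (convex_Ioo σ τ) (f' := fun t ↦ f' t - m)
      (fun t ht ↦ (hg t ht).continuousAt.continuousWithinAt) (fun t ht ↦ ?_) (fun t ht ↦ ?_) <;>
      rw [interior_Ioo] at ht
    · exact (hg t ht).hasDerivWithinAt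
    · linarith [hm t ht]
  have hbdd : BddAbove ((fun t ↦ f t - m * t) '' Ioo σ τ) := by
    refine ⟨M + |m| * max |σ| |τ|, ?_⟩
    rintro _ ⟨t, ht, rfl⟩
    have : -(m * t) ≤ |m| * max |σ| |τ| := calc
      -(m * t) ≤ |m * t| := neg_le_abs _
      _ = |m| * |t| := abs_mul m t
      _ ≤ |m| * max |σ| |τ| := by gcongr; exact abs_le_max_abs_abs ht.1.le ht.2.le
    linarith [hM t ht]
  refine ⟨_, ((hmono.tendsto_nhdsWithin_Ioo_left (nonempty_Ioo.2 hστ) hbdd).add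
    ((continuous_const_mul m).tendsto τ |>.mono_left nhdsWithin_le_nhds)).congr fun t ↦ ?_⟩
  ring

end

theorem hasDerivWithinAt_ite_Ico {E : Type*} [NormedAddCommGroup E] [NormedSpace ℝ E]
    {u u' w w' : ℝ → E} {σ τ τ' : ℝ} (hστ : σ < τ)
    (hu : ∀ t ∈ Ico σ τ, HasDerivWithinAt u (u' t) (Ico σ τ) t)
    (hu_lim : Tendsto u (𝓝[<] τ) (𝓝 (w τ))) (hu'_lim : Tendsto u' (𝓝[<] τ) (𝓝 (w' τ)))
    (hw : ∀ t ∈ Ico τ τ', HasDerivAt w (w' t) t) :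
    ∀ t ∈ Ico σ τ', HasDerivWithinAt (fun t ↦ if t < τ then u t else w t)
      (if t < τ then u' t else w' t) (Ico σ τ') t := by
  set g := fun t ↦ if t < τ then u t else w t
  have hgu : ∀ t ∈ Iio τ, g t = u t := fun t ht ↦ if_pos ht
  have hgw : ∀ t ∈ Ici τ, g t = w t := fun t ht ↦ if_neg (not_lt.2 ht)
  have hleft : ∀ t ∈ Ioo σ τ, HasDerivAt g (u' t) t := fun t ht ↦
    ((hu t (Ioo_subset_Ico_self ht)).hasDerivAt (Ico_mem_nhds ht.1 ht.2)).congr_of_eventuallyEq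
      (eventually_of_mem (Iio_mem_nhds ht.2) hgu)
  intro t ht
  rcases lt_trichotomy t τ with hlt | rfl | hgt
  · have hmem : Ico σ τ ∈ 𝓝[Ico σ τ'] t :=
      mem_nhdsWithin.2 ⟨Iio τ, isOpen_Iio, hlt, fun x hx ↦ ⟨hx.2.1, hx.1⟩⟩
    rw [if_pos hlt]
    exact ((hu t ⟨ht.1, hlt⟩).mono_of_mem_nhdsWithin hmem).congr_of_eventuallyEq
      (eventually_of_mem hmem fun x hx ↦ hgu x hx.2) (hgu t hlt)
  · have hIic : HasDerivWithinAt g (w' t) (Iic t) t := by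
      refine hasDerivWithinAt_Iic_of_tendsto_deriv (s := Ioo σ t)
        (fun x hx ↦ (hleft x hx).differentiableAt.differentiableWithinAt) ?_
        (Ioo_mem_nhdsLT hστ) ?_
      · rw [ContinuousWithinAt, hgw t self_mem_Ici]
        exact (hu_lim.mono_left (nhdsWithin_mono _ Ioo_subset_Iio_self)).congr'
          (eventually_of_mem self_mem_nhdsWithin fun x hx ↦ (hgu x hx.2).symm)
      · exact hu'_lim.congr'
          (eventually_of_mem (Ioo_mem_nhdsLT hστ) fun x hx ↦ (hleft x hx).deriv.symm)
    have hIci : HasDerivWithinAt g (w' t) (Ici t) t :=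
      (hw t ⟨le_rfl, ht.2⟩).hasDerivWithinAt.congr hgw (hgw t self_mem_Ici)
    have := hIic.union hIci
    rw [Iic_union_Ici, hasDerivWithinAt_univ] at this
    rw [if_neg (lt_irrefl t)]
    exact this.hasDerivWithinAt
  · rw [if_neg hgt.not_gt]
    exact (hw t ⟨hgt.le, ht.2⟩).hasDerivWithinAt.congr_of_eventuallyEq
      (eventually_nhdsWithin_of_eventually_nhds <|
        eventually_of_mem (Ioi_mem_nhds hgt) fun x (hx : τ < x) ↦ hgw x hx.le) (hgw t hgt.le)

theorem exists_local_solution (μ p τ L : ℝ) {A : ℝ} (hA : 0 < A) :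
    ∃ ε > 0, ∃ c d : ℝ → ℝ, c τ = A ∧ d τ = L ∧ ∀ t ∈ Ioo (τ - ε) (τ + ε),
      0 < c t ∧ HasDerivAt c (d t) t ∧ HasDerivAt d (μ * c t ^ p) t := by
  set V : ℝ × ℝ → ℝ × ℝ := fun x ↦ (x.2, μ * x.1 ^ p)
  have hV : ContDiffAt ℝ 1 V (A, L) := contDiffAt_snd.prodMk <|
    contDiffAt_const.mul ((Real.contDiffAt_rpow_const_of_ne hA.ne').comp (A, L) contDiffAt_fst)
  obtain ⟨f, hfτ, ε, hε, hf⟩ :=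
    hV.exists_forall_mem_closedBall_exists_eq_forall_mem_Ioo_hasDerivAt₀ τ
  have hc : ∀ t ∈ Ioo (τ - ε) (τ + ε), HasDerivAt (fun t ↦ (f t).1) (f t).2 t :=
    fun t ht ↦ (hasFDerivAt_fst (𝕜 := ℝ) (p := f t)).comp_hasDerivAt t (hf t ht)
  have hd : ∀ t ∈ Ioo (τ - ε) (τ + ε), HasDerivAt (fun t ↦ (f t).2) (μ * (f t).1 ^ p) t :=
    fun t ht ↦ (hasFDerivAt_snd (𝕜 := ℝ) (p := f t)).comp_hasDerivAt t (hf t ht)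
  have hpos : ∀ᶠ t in 𝓝 τ, 0 < (f t).1 :=
    (hc τ ⟨by linarith, by linarith⟩).continuousAt.eventually_const_lt (by simpa [hfτ] using hA)
  obtain ⟨δ, hδ, hball⟩ := Metric.eventually_nhds_iff.1 hpos
  have hsub : Ioo (τ - min ε δ) (τ + min ε δ) ⊆ Ioo (τ - ε) (τ + ε) :=
    Ioo_subset_Ioo (by linarith [min_le_left ε δ]) (by linarith [min_le_left ε δ])
  refine ⟨min ε δ, lt_min hε hδ, _, _, by simp [hfτ], by simp [hfτ], fun t ht ↦
    ⟨hball ?_, hc t (hsub ht), hd t (hsub ht)⟩⟩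
  rw [Real.dist_eq, abs_sub_lt_iff]
  constructor <;> linarith [ht.1, ht.2, min_le_right ε δ]

def IsSolutionOn (μ p : ℝ) (s : Set ℝ) (a v : ℝ → ℝ) : Prop :=
  ∀ t ∈ s, HasDerivWithinAt a (v t) s t ∧ HasDerivWithinAt v (μ * a t ^ p) s t

namespace IsSolutionOn

variable {μ p : ℝ} {s : Set ℝ} {a v : ℝ → ℝ}

theorem of_contDiffOn (hs : UniqueDiffOn ℝ s) (ha : ContDiffOn ℝ 2 a s)
    (hode : ∀ t ∈ s, derivWithin (derivWithin a s) s t = μ * a t ^ p) :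
    IsSolutionOn μ p s a (derivWithin a s) := fun t ht ↦
  ⟨(ha.differentiableOn (by norm_num) t ht).hasDerivWithinAt,
    hode t ht ▸ ((ha.derivWithin hs (m := 1) (by norm_num)).differentiableOn one_ne_zero t
      ht).hasDerivWithinAt⟩

theorem derivWithin_eq (hs : UniqueDiffOn ℝ s) (h : IsSolutionOn μ p s a v) :
    EqOn (derivWithin a s) v s := fun t ht ↦ (h t ht).1.derivWithin (hs t ht)

theorem derivWithin_derivWithin (hs : UniqueDiffOn ℝ s) (h : IsSolutionOn μ p s a v) :
    ∀ t ∈ s, derivWithin (derivWithin a s) s t = μ * a t ^ p := fun t ht ↦ by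
  rw [derivWithin_congr (h.derivWithin_eq hs) (h.derivWithin_eq hs ht)]
  exact (h t ht).2.derivWithin (hs t ht)

theorem contDiffOn (hs : UniqueDiffOn ℝ s) (h : IsSolutionOn μ p s a v)
    (hpos : ∀ t ∈ s, 0 < a t) : ContDiffOn ℝ 2 a s := by
  have ha : ContinuousOn a s := fun t ht ↦ (h t ht).1.continuousWithinAt
  have hv : ContDiffOn ℝ 1 v s := by
    rw [show (1 : WithTop ℕ∞) = 0 + 1 from rfl, contDiffOn_succ_iff_derivWithin hs]
    refine ⟨fun t ht ↦ (h t ht).2.differentiableWithinAt, by simp, ?_⟩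
    have hrhs : ContinuousOn (fun t ↦ μ * a t ^ p) s :=
      continuousOn_const.mul (ha.rpow_const fun t ht ↦ Or.inl (hpos t ht).ne')
    exact contDiffOn_zero.2 <| hrhs.congr fun t ht ↦ (h t ht).2.derivWithin (hs t ht)
  rw [show (2 : WithTop ℕ∞) = 1 + 1 from rfl, contDiffOn_succ_iff_derivWithin hs]
  exact ⟨fun t ht ↦ (h t ht).1.differentiableWithinAt, by simp, hv.congr (h.derivWithin_eq hs)⟩

theorem antitoneOn (hs : Convex ℝ s) (h : IsSolutionOn μ p s a v) (hμ : μ ≤ 0)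
    (hpos : ∀ t ∈ s, 0 ≤ a t) : AntitoneOn v s := fun x hx y hy hxy ↦ by
  have := hs.image_sub_le_mul_sub_of_hasDerivWithinAt_le (fun t ht ↦ (h t ht).2)
    (fun t ht ↦ mul_nonpos_of_nonpos_of_nonneg hμ (Real.rpow_nonneg (hpos t ht) p)) x hx y hy hxy
  linarith

theorem exists_nonpos_of_Ici {t₀ : ℝ} (hμ : μ < 0) (hp : 0 ≤ p)
    (h : IsSolutionOn μ p (Ici t₀) a v) : ∃ t ∈ Ici t₀, a t ≤ 0 := by
  by_contra! hpos
  have hanti := h.antitoneOn (convex_Ici t₀) hμ.le fun t ht ↦ (hpos t ht).le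
  have hv : ∀ t ∈ Ici t₀, 0 ≤ v t := by
    by_contra! ⟨t₁, ht₁, hv₁⟩
    have ht₁₀ : Ici t₁ ⊆ Ici t₀ := Ici_subset_Ici.2 ht₁
    obtain ⟨t, ht, hat⟩ := exists_neg_of_hasDerivWithinAt_le_neg hv₁
      (fun t ht ↦ ((h t (ht₁₀ ht)).1.mono ht₁₀)) fun t ht ↦ hanti ht₁ (ht₁₀ ht) ht
    exact (hpos t (ht₁₀ ht)).not_gt hat
  have ha : ∀ t ∈ Ici t₀, a t₀ ≤ a t := fun t ht ↦ by
    have := (convex_Ici t₀).mul_sub_le_image_sub_of_le_hasDerivWithinAt (C := 0)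
      (fun t ht ↦ (h t ht).1) hv t₀ self_mem_Ici t ht ht
    linarith
  have hC : μ * a t₀ ^ p < 0 :=
    mul_neg_of_neg_of_pos hμ (Real.rpow_pos_of_pos (hpos t₀ self_mem_Ici) p)
  obtain ⟨t, ht, hvt⟩ := exists_neg_of_hasDerivWithinAt_le_neg hC (fun t ht ↦ (h t ht).2)
    fun t ht ↦ mul_le_mul_of_nonpos_left
      (Real.rpow_le_rpow (hpos t₀ self_mem_Ici).le (ha t ht) hp) hμ.le
  exact (hv t ht).not_gt hvt

theorem exists_tendsto_nhdsLT {t₀ τ : ℝ} (hτ : t₀ < τ) (hμ : μ ≤ 0) (hp : 0 ≤ p)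
    (h : IsSolutionOn μ p (Ico t₀ τ) a v) (hpos : ∀ t ∈ Ico t₀ τ, 0 < a t) :
    (∃ A, Tendsto a (𝓝[<] τ) (𝓝 A)) ∧ ∃ L, Tendsto v (𝓝[<] τ) (𝓝 L) := by
  have h₀ : t₀ ∈ Ico t₀ τ := ⟨le_rfl, hτ⟩
  have hanti := h.antitoneOn (convex_Ico t₀ τ) hμ fun t ht ↦ (hpos t ht).le
  set M := a t₀ + |v t₀| * (τ - t₀)
  have ha_le : ∀ t ∈ Ico t₀ τ, a t ≤ M := fun t ht ↦ by
    have := (convex_Ico t₀ τ).image_sub_le_mul_sub_of_hasDerivWithinAt_le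
      (fun t ht ↦ (h t ht).1) (fun t ht ↦ hanti h₀ ht ht.1) t₀ h₀ t ht ht.1
    have : v t₀ * (t - t₀) ≤ |v t₀| * (τ - t₀) :=
      mul_le_mul (le_abs_self _) (by linarith [ht.2]) (by linarith [ht.1]) (abs_nonneg _)
    linarith
  set C := μ * M ^ p
  have hC : ∀ t ∈ Ico t₀ τ, C ≤ μ * a t ^ p := fun t ht ↦
    mul_le_mul_of_nonpos_left (Real.rpow_le_rpow (hpos t ht).le (ha_le t ht) hp) hμ
  have hC_nonpos : C ≤ 0 := mul_nonpos_of_nonpos_of_nonneg hμ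
    (Real.rpow_nonneg ((hpos t₀ h₀).le.trans (ha_le t₀ h₀)) p)
  set m := v t₀ + C * (τ - t₀)
  have hv_ge : ∀ t ∈ Ico t₀ τ, m ≤ v t := fun t ht ↦ by
    have := (convex_Ico t₀ τ).mul_sub_le_image_sub_of_le_hasDerivWithinAt
      (fun t ht ↦ (h t ht).2) hC t₀ h₀ t ht ht.1
    nlinarith [ht.2]
  have hderiv : ∀ t ∈ Ioo t₀ τ, HasDerivAt a (v t) t ∧ HasDerivAt v (μ * a t ^ p) t :=
    fun t ht ↦ ⟨(h t (Ioo_subset_Ico_self ht)).1.hasDerivAt (Ico_mem_nhds ht.1 ht.2),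
      (h t (Ioo_subset_Ico_self ht)).2.hasDerivAt (Ico_mem_nhds ht.1 ht.2)⟩
  exact ⟨exists_tendsto_nhdsLT_of_le_deriv hτ (fun t ht ↦ (hderiv t ht).1)
      (fun t ht ↦ hv_ge t (Ioo_subset_Ico_self ht)) fun t ht ↦ ha_le t (Ioo_subset_Ico_self ht),
    exists_tendsto_nhdsLT_of_le_deriv hτ (fun t ht ↦ (hderiv t ht).2)
      (fun t ht ↦ hC t (Ioo_subset_Ico_self ht))
      fun t ht ↦ hanti h₀ (Ioo_subset_Ico_self ht) ht.1.le⟩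

theorem exists_extension {t₀ τ A L : ℝ} (hτ : t₀ < τ) (h : IsSolutionOn μ p (Ico t₀ τ) a v)
    (hpos : ∀ t ∈ Ico t₀ τ, 0 < a t) (ha : Tendsto a (𝓝[<] τ) (𝓝 A)) (hA : 0 < A)
    (hv : Tendsto v (𝓝[<] τ) (𝓝 L)) :
    ∃ τ' > τ, ∃ b w : ℝ → ℝ, IsSolutionOn μ p (Ico t₀ τ') b w ∧
      (∀ t ∈ Ico t₀ τ', 0 < b t) ∧ ∀ t ∈ Ico t₀ τ, b t = a t := by
  obtain ⟨ε, hε, c, d, rfl, rfl, hcd⟩ := exists_local_solution μ p τ L hA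
  have hsub : Ico τ (τ + ε) ⊆ Ioo (τ - ε) (τ + ε) := fun t ht ↦ ⟨by linarith [ht.1], ht.2⟩
  refine ⟨τ + ε, by linarith, fun t ↦ if t < τ then a t else c t,
    fun t ↦ if t < τ then v t else d t, fun t ht ↦ ⟨?_, ?_⟩, fun t ht ↦ ?_, fun t ht ↦ if_pos ht.2⟩
  · exact hasDerivWithinAt_ite_Ico hτ (fun t ht ↦ (h t ht).1) ha hv
      (fun t ht ↦ (hcd t (hsub ht)).2.1) t ht
  · refine (hasDerivWithinAt_ite_Ico hτ (fun t ht ↦ (h t ht).2) hv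
      ((ha.rpow_const (Or.inl hA.ne')).const_mul μ) (fun t ht ↦ (hcd t (hsub ht)).2.2) t
      ht).congr_deriv ?_
    dsimp only
    split_ifs <;> rfl
  · dsimp only
    split_ifs with hlt
    exacts [hpos t ⟨ht.1, hlt⟩, (hcd t (hsub ⟨not_lt.1 hlt, ht.2⟩)).1]

end IsSolutionOn

/-- For `h > 1`, `μ < 0`, there is no global positive C² solution of
`ä = μ a^{h−1}` (so the maximal lifespan `τ` is finite), and any maximal positive
C² solution on `[0,τ)` collapses: `a(t) → 0` as `t → τ⁻`. -/
theorem finite_time_collapse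
    (h μ : ℝ) (hh : 1 < h) (hμ : μ < 0) :
    ∀ a₀ a₁ : ℝ, 0 < a₀ →
      -- the lifespan is finite: there is no global positive solution on [0,∞)
      (¬ ∃ a : ℝ → ℝ,
        ContDiffOn ℝ 2 a (Set.Ici 0) ∧
        (∀ t ∈ Set.Ici (0:ℝ), 0 < a t) ∧
        a 0 = a₀ ∧ derivWithin a (Set.Ici 0) 0 = a₁ ∧
        (∀ t ∈ Set.Ici (0:ℝ),
          derivWithin (derivWithin a (Set.Ici 0)) (Set.Ici 0) t = μ * a t ^ (h - 1))) ∧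
      -- any maximal positive solution on a finite interval [0,τ) tends to 0 at τ
      (∀ τ : ℝ, 0 < τ → ∀ a : ℝ → ℝ,
        ContDiffOn ℝ 2 a (Set.Ico 0 τ) →
        (∀ t ∈ Set.Ico (0:ℝ) τ, 0 < a t) →
        a 0 = a₀ →
        derivWithin a (Set.Ico 0 τ) 0 = a₁ →
        (∀ t ∈ Set.Ico (0:ℝ) τ,
          derivWithin (derivWithin a (Set.Ico 0 τ)) (Set.Ico 0 τ) t = μ * a t ^ (h - 1)) →
        -- maximality: no positive C² solution on a strictly larger interval extends a
        (∀ τ' : ℝ, τ < τ' →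
          ¬ ∃ b : ℝ → ℝ,
            ContDiffOn ℝ 2 b (Set.Ico 0 τ') ∧
            (∀ t ∈ Set.Ico (0:ℝ) τ', 0 < b t) ∧
            (∀ t ∈ Set.Ico (0:ℝ) τ, b t = a t) ∧
            (∀ t ∈ Set.Ico (0:ℝ) τ',
              derivWithin (derivWithin b (Set.Ico 0 τ')) (Set.Ico 0 τ') t
                = μ * b t ^ (h - 1))) →
        Filter.Tendsto a (nhdsWithin τ (Set.Iio τ)) (nhds 0)) := by
  have hp : 0 ≤ h - 1 := by linarith
  intro _ _ _
  refine ⟨?_, ?_⟩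
  · rintro ⟨a, ha, hpos, -, -, hode⟩
    obtain ⟨t, ht, hat⟩ :=
      (IsSolutionOn.of_contDiffOn (uniqueDiffOn_Ici 0) ha hode).exists_nonpos_of_Ici hμ hp
    exact (hpos t ht).not_ge hat
  · intro τ hτ a ha hpos _ _ hode hmax
    have hsol := IsSolutionOn.of_contDiffOn (uniqueDiffOn_Ico 0 τ) ha hode
    obtain ⟨⟨A, hA⟩, L, hL⟩ := hsol.exists_tendsto_nhdsLT hτ hμ.le hp hpos
    have hA₀ : 0 ≤ A := ge_of_tendsto hA <|
      eventually_of_mem (Ioo_mem_nhdsLT hτ) fun t ht ↦ (hpos t (Ioo_subset_Ico_self ht)).le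
    obtain rfl | hA₀ := hA₀.eq_or_lt
    · exact hA
    obtain ⟨τ', hττ', b, w, hb, hbpos, hba⟩ := hsol.exists_extension hτ hpos hA hA₀ hL
    exact absurd ⟨b, hb.contDiffOn (uniqueDiffOn_Ico 0 τ') hbpos, hbpos, hba,
      hb.derivWithin_derivWithin (uniqueDiffOn_Ico 0 τ')⟩ (hmax τ' hττ')
end

section
/- Let h ∈ ℝ, let f : ℝ₊ → ℝ₊ be C² with f'(1) = 0 and f''(u) ≥ 0 for all u ∈ ℝ₊, and define L : ℝ₊² → ℝ by L(λ₁,λ₂) = (λ₁λ₂²)^{h/3} f(λ₁/λ₂). Then for all λ₁, λ₂ ∈ ℝ₊ with λ₁ ≠ λ₂, the Baker–Ericksen quotient is nonnegative: ( λ₁ L,₁(λ) − (1/2) λ₂ L,₂(λ) ) / (λ₁ − λ₂) ≥ 0. -/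
open Set

/-!
The operator `l1 ∂₁ - ½ l2 ∂₂` annihilates the volume factor `l1 * l2 ^ 2` and multiplies the
ratio `u = l1 / l2` by `3 / 2`, so the Baker–Ericksen numerator is
`3/2 · u · (l1 l2²)^(h/3) · f'(u)`. Since `f'' ≥ 0`, `f'` is monotone, and with `f'(1) = 0`
the sign of `f'(u)` is that of `u - 1`, i.e. of `l1 - l2`.
-/

theorem hasDerivAt_rpow_mul_sq_mul_comp_div_fst {f : ℝ → ℝ} {f' p a b : ℝ} (ha : a ≠ 0)
    (hb : b ≠ 0) (hf : HasDerivAt f f' (a / b)) :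
    HasDerivAt (fun s => (s * b ^ 2) ^ p * f (s / b))
      ((a * b ^ 2) ^ p * (p / a * f (a / b) + f' / b)) a := by
  have hJ : a * b ^ 2 ≠ 0 := by positivity
  have hpow : HasDerivAt (fun s => (s * b ^ 2) ^ p) (p * (a * b ^ 2) ^ (p - 1) * b ^ 2) a := by
    refine (Real.hasDerivAt_rpow_const (Or.inl hJ)).comp a ((hasDerivAt_id' a).mul_const (b ^ 2)
      |>.congr_deriv ?_)
    ring
  have hcomp : HasDerivAt (fun s => f (s / b)) (f' * (1 / b)) a :=
    hf.comp a ((hasDerivAt_id a).div_const b)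
  refine (hpow.mul hcomp).congr_deriv ?_
  rw [Real.rpow_sub_one hJ]
  field_simp

theorem hasDerivAt_rpow_mul_sq_mul_comp_div_snd {f : ℝ → ℝ} {f' p a b : ℝ} (ha : a ≠ 0)
    (hb : b ≠ 0) (hf : HasDerivAt f f' (a / b)) :
    HasDerivAt (fun s => (a * s ^ 2) ^ p * f (a / s))
      ((a * b ^ 2) ^ p * (2 * p / b * f (a / b) - a * f' / b ^ 2)) b := by
  have hJ : a * b ^ 2 ≠ 0 := by positivity
  have hpow : HasDerivAt (fun s => (a * s ^ 2) ^ p) (p * (a * b ^ 2) ^ (p - 1) * (a * (2 * b)))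
      b := by
    refine (Real.hasDerivAt_rpow_const (Or.inl hJ)).comp b ((hasDerivAt_pow 2 b).const_mul a
      |>.congr_deriv ?_)
    ring
  have hcomp : HasDerivAt (fun s => f (a / s)) (f' * (-(a / b ^ 2))) b := by
    refine hf.comp b ((hasDerivAt_inv hb).const_mul a |>.congr_deriv ?_)
    ring
  refine (hpow.mul hcomp).congr_deriv ?_
  rw [Real.rpow_sub_one hJ]
  field_simp
  ring

theorem bakerEricksen_numerator_eq {f : ℝ → ℝ} {p l1 l2 : ℝ} (hl1 : l1 ≠ 0) (hl2 : l2 ≠ 0)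
    (hf : DifferentiableAt ℝ f (l1 / l2)) :
    l1 * deriv (fun s => (s * l2 ^ 2) ^ p * f (s / l2)) l1
        - (1 / 2) * l2 * deriv (fun s => (l1 * s ^ 2) ^ p * f (l1 / s)) l2
      = 3 / 2 * (l1 / l2) * (l1 * l2 ^ 2) ^ p * deriv f (l1 / l2) := by
  rw [(hasDerivAt_rpow_mul_sq_mul_comp_div_fst hl1 hl2 hf.hasDerivAt).deriv,
    (hasDerivAt_rpow_mul_sq_mul_comp_div_snd hl1 hl2 hf.hasDerivAt).deriv]
  field_simp
  ring

theorem monotoneOn_deriv_of_contDiffOn_two {f : ℝ → ℝ} {s : Set ℝ} (hs : IsOpen s)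
    (hs' : Convex ℝ s) (hf : ContDiffOn ℝ 2 f s) (hf'' : ∀ x ∈ s, 0 ≤ deriv (deriv f) x) :
    MonotoneOn (deriv f) s := by
  have hd : DifferentiableOn ℝ (deriv f) s :=
    (hf.deriv_of_isOpen hs (by norm_num)).differentiableOn one_ne_zero
  exact monotoneOn_of_deriv_nonneg hs' hd.continuousOn (hd.mono interior_subset)
    fun x hx => hf'' x (interior_subset hx)

theorem baker_ericksen_inequality_general
    (h : ℝ) (f : ℝ → ℝ)
    (hfC2 : ContDiffOn ℝ 2 f (Set.Ioi 0))
    (hf'1 : deriv f 1 = 0)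
    (hf'' : ∀ u : ℝ, 0 < u → 0 ≤ deriv (deriv f) u) :
    ∀ l1 l2 : ℝ, 0 < l1 → 0 < l2 → l1 ≠ l2 →
      0 ≤ (l1 * deriv (fun s => (s * l2 ^ 2) ^ (h / 3) * f (s / l2)) l1
            - (1/2) * l2 * deriv (fun s => (l1 * s ^ 2) ^ (h / 3) * f (l1 / s)) l2)
          / (l1 - l2) := by
  intro l1 l2 hl1 hl2 hne
  have hu : l1 / l2 ∈ Ioi (0 : ℝ) := div_pos hl1 hl2
  have hfu : DifferentiableAt ℝ f (l1 / l2) :=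
    (hfC2.differentiableOn (by norm_num)).differentiableAt (isOpen_Ioi.mem_nhds hu)
  have hslope : 0 ≤ deriv f (l1 / l2) / (l1 / l2 - 1) := by
    have := (monotoneOn_deriv_of_contDiffOn_two isOpen_Ioi (convex_Ioi 0) hfC2
      fun x hx => hf'' x hx).slope_nonneg (mem_Ioi.2 one_pos) hu
    rwa [slope_def_field, hf'1, sub_zero] at this
  have hsub : l1 - l2 ≠ 0 := sub_ne_zero.2 hne
  calc (0 : ℝ) ≤ 3 / 2 * (l1 / l2 ^ 2) * (l1 * l2 ^ 2) ^ (h / 3)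
        * (deriv f (l1 / l2) / (l1 / l2 - 1)) := by positivity
    _ = _ := by
      rw [bakerEricksen_numerator_eq hl1.ne' hl2.ne' hfu, div_sub_one hl2.ne']
      field_simp

/-- The Baker–Ericksen quotient is nonnegative for
`L(λ₁,λ₂) = (λ₁λ₂²)^{h/3} f(λ₁/λ₂)` when `f'(1) = 0` and `f'' ≥ 0` on `ℝ₊`. -/
theorem baker_ericksen_inequality
    (h : ℝ) (f : ℝ → ℝ)
    (hfC2 : ContDiffOn ℝ 2 f (Set.Ioi 0))
    (hfpos : ∀ u : ℝ, 0 < u → 0 < f u)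
    (hf'1 : deriv f 1 = 0)
    (hf'' : ∀ u : ℝ, 0 < u → 0 ≤ deriv (deriv f) u) :
    ∀ l1 l2 : ℝ, 0 < l1 → 0 < l2 → l1 ≠ l2 →
      0 ≤ (l1 * deriv (fun s => (s * l2 ^ 2) ^ (h / 3) * f (s / l2)) l1
            - (1/2) * l2 * deriv (fun s => (l1 * s ^ 2) ^ (h / 3) * f (l1 / s)) l2)
          / (l1 - l2) :=
  baker_ericksen_inequality_general h f hfC2 hf'1 hf''
end
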